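/- Let Λ₁, …, Λ_m ≤ 0 be real numbers, c₁, …, c_m complex numbers not all zero, and α ≠ 0 a real number with either 1/α > Σ|c_k|² or 1/α < 0. Then the rational function Q(Λ) = Σ_k Λ_k|c_k|²/(Λ_k - Λ) - 1/α has no root Λ ≥ 0. -/
import Mathlib


/-- if Λ_k ≤ 0, the c_k are not all zero, α ≠ 0, and either
1/α > Σ|c_k|² or 1/α < 0, then Q(Λ) = Σ_k Λ_k|c_k|²/(Λ_k - Λ) - 1/α has no root Λ ≥ 0. -/
theorem stmt10 {m : ℕ} (Λ : Fin m → ℝ) (hΛ : ∀ k, Λ k ≤ 0)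
    (c : Fin m → ℂ) (hc : ∃ k, c k ≠ 0)
    (α : ℝ) (hα : α ≠ 0)
    (hcase : 1 / α > ∑ k, ‖c k‖ ^ 2 ∨ 1 / α < 0) :
    ∀ L : ℝ, 0 ≤ L → (∀ k, Λ k ≠ L) →
      (∑ k, Λ k * ‖c k‖ ^ 2 / (Λ k - L)) - 1 / α ≠ 0 := by
  intro L hL hne
  have hden : ∀ k, Λ k - L < 0 := by
    intro k
    have := hΛ k
    have := hne k
    rcases lt_or_eq_of_le (sub_nonpos.mpr (le_trans (hΛ k) hL)) with h | h
    · exact h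
    · exact absurd (by linarith [sub_eq_zero.mp h]) (hne k)
  have hlb : (0:ℝ) ≤ ∑ k, Λ k * ‖c k‖ ^ 2 / (Λ k - L) := by
    apply Finset.sum_nonneg
    intro k _
    have h1 : Λ k * ‖c k‖ ^ 2 ≤ 0 := mul_nonpos_of_nonpos_of_nonneg (hΛ k) (by positivity)
    exact div_nonneg_iff.mpr (Or.inr ⟨h1, (hden k).le⟩)
  have hub : (∑ k, Λ k * ‖c k‖ ^ 2 / (Λ k - L)) ≤ ∑ k, ‖c k‖ ^ 2 := by
    apply Finset.sum_le_sum
    intro k _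
    rw [div_le_iff_of_neg (hden k)]
    have : 0 ≤ L * ‖c k‖ ^ 2 := by positivity
    nlinarith
  rcases hcase with h | h
  · intro heq; nlinarith
  · intro heq; nlinarith
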